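/- Let m, n, ℓ, ε, η be positive integers and let Δ_S(λ) = Δ_a − λΔ_b be a pencil of size ((η+1)m+ℓ+εn) × ((ε+1)n+ℓ+ηm), partitioned into 3×3 blocks Δ_{ij}(λ) = Δ_{ij}^a − λΔ_{ij}^b with row block sizes (η+1)m, ℓ, εn and column block sizes (ε+1)n, ℓ, ηm. Let ΔT be the block matrix built from these blocks as in the context. Then ‖ΔT‖₂ ≤ √3 · ‖Δ_S(λ)‖₂. -/

import Mathlib

open Matrix
open scoped Kronecker

noncomputable section

/-- The `k × (k+1)` matrix `E_k = [I_k 0]`. -/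
def Ek (𝕜 : Type*) [RCLike 𝕜] (k : ℕ) : Matrix (Fin k) (Fin (k+1)) 𝕜 :=
  Matrix.of fun i j => if (j : ℕ) = (i : ℕ) then 1 else 0

/-- The `k × (k+1)` matrix `F_k = [0 I_k]`. -/
def Fk (𝕜 : Type*) [RCLike 𝕜] (k : ℕ) : Matrix (Fin k) (Fin (k+1)) 𝕜 :=
  Matrix.of fun i j => if (j : ℕ) = (i : ℕ) + 1 then 1 else 0

/-- The standard unit vector `(0, …, 0, 1)ᵀ` of size `k+1`. -/
def evec (𝕜 : Type*) [RCLike 𝕜] (k : ℕ) : Fin (k+1) → 𝕜 :=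
  fun i => if (i : ℕ) = k then 1 else 0

variable {𝕜 : Type*} [RCLike 𝕜]

/-- Frobenius norm of a matrix. -/
def frobNorm {p q : Type*} [Fintype p] [Fintype q] (M : Matrix p q 𝕜) : ℝ :=
  Real.sqrt (∑ i, ∑ j, ‖M i j‖ ^ 2)

/-- Spectral norm (largest singular value) of a matrix. -/
def specNorm {p q : Type*} [Fintype p] [Fintype q] [DecidableEq p] (M : Matrix p q 𝕜) : ℝ :=
  Real.sqrt (⨆ i, (Matrix.isHermitian_mul_conjTranspose_self M).eigenvalues i)

/-- Smallest singular value of a `p × q` matrix with `p ≤ q`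
(the `p`-th largest singular value). -/
def sigmaMin {p q : Type*} [Fintype p] [Fintype q] [DecidableEq p] (M : Matrix p q 𝕜) : ℝ :=
  Real.sqrt (⨅ i, (Matrix.isHermitian_mul_conjTranspose_self M).eigenvalues i)

/-- Euclidean norm of a vector. -/
def vecNorm {q : Type*} [Fintype q] (x : q → 𝕜) : ℝ :=
  Real.sqrt (∑ i, ‖x i‖ ^ 2)

/-- Frobenius norm of the pencil `P.1 - λ • P.2`. -/
def pFrob {p q : Type*} [Fintype p] [Fintype q] (P : Matrix p q 𝕜 × Matrix p q 𝕜) : ℝ :=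
  Real.sqrt (frobNorm P.1 ^ 2 + frobNorm P.2 ^ 2)

/-- Spectral norm of the pencil `P.1 - λ • P.2`. -/
def pSpec {p q : Type*} [Fintype p] [Fintype q] [DecidableEq p]
    (P : Matrix p q 𝕜 × Matrix p q 𝕜) : ℝ :=
  Real.sqrt (specNorm P.1 ^ 2 + specNorm P.2 ^ 2)

/-- A 3×3 block matrix. -/
def blocks3 {R1 R2 R3 C1 C2 C3 : Type*}
    (M11 : Matrix R1 C1 𝕜) (M12 : Matrix R1 C2 𝕜) (M13 : Matrix R1 C3 𝕜)
    (M21 : Matrix R2 C1 𝕜) (M22 : Matrix R2 C2 𝕜) (M23 : Matrix R2 C3 𝕜)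
    (M31 : Matrix R3 C1 𝕜) (M32 : Matrix R3 C2 𝕜) (M33 : Matrix R3 C3 𝕜) :
    Matrix (R1 ⊕ (R2 ⊕ R3)) (C1 ⊕ (C2 ⊕ C3)) 𝕜 :=
  Matrix.fromBlocks M11 (Matrix.fromCols M12 M13) (Matrix.fromRows M21 M31)
    (Matrix.fromBlocks M22 M23 M32 M33)

/-- `K̂₂ᵀ C = (e_{η+1} ⊗ I_m) C`. -/
def colUnit {m ℓ : ℕ} (η : ℕ) (C : Matrix (Fin m) (Fin ℓ) 𝕜) :
    Matrix (Fin (η+1) × Fin m) (Fin ℓ) 𝕜 :=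
  Matrix.of fun i j => evec 𝕜 η i.1 * C i.2 j

/-- `B K̂₁ = B (e_{ε+1}ᵀ ⊗ I_n)`. -/
def rowUnit {n ℓ : ℕ} (ε : ℕ) (B : Matrix (Fin ℓ) (Fin n) 𝕜) :
    Matrix (Fin ℓ) (Fin (ε+1) × Fin n) 𝕜 :=
  Matrix.of fun i j => evec 𝕜 ε j.1 * B i j.2

/-- Row index type of a block Kronecker pencil. -/
abbrev SRow (m ℓ ε η n : ℕ) := (Fin (η+1) × Fin m) ⊕ (Fin ℓ ⊕ (Fin ε × Fin n))

/-- Column index type of a block Kronecker pencil. -/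
abbrev SCol (m ℓ ε η n : ℕ) := (Fin (ε+1) × Fin n) ⊕ (Fin ℓ ⊕ (Fin η × Fin m))

/-- The block Kronecker pencil
`S(λ) = [[M(λ), K̂₂ᵀC, K₂ᵀ(λ)], [BK̂₁, A-λI, 0], [K₁(λ), 0, 0]]`
represented as a pair `(Sa, Sb)` with `S(λ) = Sa - λ Sb`. -/
def blockKron (m n ℓ ε η : ℕ) (A : Matrix (Fin ℓ) (Fin ℓ) 𝕜) (B : Matrix (Fin ℓ) (Fin n) 𝕜)
    (C : Matrix (Fin m) (Fin ℓ) 𝕜)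
    (M : Matrix (Fin (η+1) × Fin m) (Fin (ε+1) × Fin n) 𝕜 ×
         Matrix (Fin (η+1) × Fin m) (Fin (ε+1) × Fin n) 𝕜) :
    Matrix (SRow m ℓ ε η n) (SCol m ℓ ε η n) 𝕜 × Matrix (SRow m ℓ ε η n) (SCol m ℓ ε η n) 𝕜 :=
  (blocks3 M.1 (colUnit η C) ((Ek 𝕜 η)ᵀ ⊗ₖ (1 : Matrix (Fin m) (Fin m) 𝕜))
      (rowUnit ε B) A 0
      (Ek 𝕜 ε ⊗ₖ (1 : Matrix (Fin n) (Fin n) 𝕜)) 0 0,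
   blocks3 M.2 0 ((Fk 𝕜 η)ᵀ ⊗ₖ (1 : Matrix (Fin m) (Fin m) 𝕜))
      0 1 0
      (Fk 𝕜 ε ⊗ₖ (1 : Matrix (Fin n) (Fin n) 𝕜)) 0 0)

/-- Row index type of the matrix `T`. -/
abbrev TRow (m ℓ ε η n : ℕ) :=
  (((Fin η × Fin m) × Fin ℓ) ⊕ ((Fin η × Fin m) × Fin ℓ)) ⊕
  (((Fin ℓ × (Fin ε × Fin n)) ⊕ (Fin ℓ × (Fin ε × Fin n))) ⊕
   (((Fin η × Fin m) × (Fin ε × Fin n)) ⊕ ((Fin η × Fin m) × (Fin ε × Fin n))))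

/-- Column index type of the matrix `T`. -/
abbrev TCol (m ℓ ε η n : ℕ) :=
  (((Fin (η+1) × Fin m) × Fin ℓ) ⊕ ((Fin η × Fin m) × Fin ℓ)) ⊕
  (((Fin ℓ × (Fin ε × Fin n)) ⊕ (Fin ℓ × (Fin (ε+1) × Fin n))) ⊕
   (((Fin (η+1) × Fin m) × (Fin ε × Fin n)) ⊕ ((Fin η × Fin m) × (Fin (ε+1) × Fin n))))

/-- The 6×6 block matrix `T`. -/
def Tmat (m n ℓ ε η : ℕ) (A : Matrix (Fin ℓ) (Fin ℓ) 𝕜) (B : Matrix (Fin ℓ) (Fin n) 𝕜)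
    (C : Matrix (Fin m) (Fin ℓ) 𝕜) : Matrix (TRow m ℓ ε η n) (TCol m ℓ ε η n) 𝕜 :=
  Matrix.fromRows
    (Matrix.fromCols
      (Matrix.fromBlocks
        ((Ek 𝕜 η ⊗ₖ (1 : Matrix (Fin m) (Fin m) 𝕜)) ⊗ₖ (1 : Matrix (Fin ℓ) (Fin ℓ) 𝕜))
        ((1 : Matrix (Fin η × Fin m) (Fin η × Fin m) 𝕜) ⊗ₖ A)
        ((Fk 𝕜 η ⊗ₖ (1 : Matrix (Fin m) (Fin m) 𝕜)) ⊗ₖ (1 : Matrix (Fin ℓ) (Fin ℓ) 𝕜))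
        ((1 : Matrix (Fin η × Fin m) (Fin η × Fin m) 𝕜) ⊗ₖ (1 : Matrix (Fin ℓ) (Fin ℓ) 𝕜)))
      (Matrix.fromCols 0
        (Matrix.fromBlocks 0
          ((1 : Matrix (Fin η × Fin m) (Fin η × Fin m) 𝕜) ⊗ₖ (rowUnit ε B))
          0 0)))
    (Matrix.fromRows
      (Matrix.fromCols 0
        (Matrix.fromCols
          (Matrix.fromBlocks
            (Aᵀ ⊗ₖ (1 : Matrix (Fin ε × Fin n) (Fin ε × Fin n) 𝕜))
            ((1 : Matrix (Fin ℓ) (Fin ℓ) 𝕜) ⊗ₖ (Ek 𝕜 ε ⊗ₖ (1 : Matrix (Fin n) (Fin n) 𝕜)))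
            ((1 : Matrix (Fin ℓ) (Fin ℓ) 𝕜) ⊗ₖ (1 : Matrix (Fin ε × Fin n) (Fin ε × Fin n) 𝕜))
            ((1 : Matrix (Fin ℓ) (Fin ℓ) 𝕜) ⊗ₖ (Fk 𝕜 ε ⊗ₖ (1 : Matrix (Fin n) (Fin n) 𝕜))))
          (Matrix.fromBlocks
            (Matrix.of fun (i : Fin ℓ × (Fin ε × Fin n))
                (j : (Fin (η+1) × Fin m) × (Fin ε × Fin n)) =>
              evec 𝕜 η j.1.1 * C j.1.2 i.1 * (if i.2 = j.2 then 1 else 0))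
            0 0 0)))
      (Matrix.fromCols 0
        (Matrix.fromCols 0
          (Matrix.fromBlocks
            ((Ek 𝕜 η ⊗ₖ (1 : Matrix (Fin m) (Fin m) 𝕜)) ⊗ₖ
              (1 : Matrix (Fin ε × Fin n) (Fin ε × Fin n) 𝕜))
            ((1 : Matrix (Fin η × Fin m) (Fin η × Fin m) 𝕜) ⊗ₖ
              (Ek 𝕜 ε ⊗ₖ (1 : Matrix (Fin n) (Fin n) 𝕜)))
            ((Fk 𝕜 η ⊗ₖ (1 : Matrix (Fin m) (Fin m) 𝕜)) ⊗ₖ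
              (1 : Matrix (Fin ε × Fin n) (Fin ε × Fin n) 𝕜))
            ((1 : Matrix (Fin η × Fin m) (Fin η × Fin m) 𝕜) ⊗ₖ
              (Fk 𝕜 ε ⊗ₖ (1 : Matrix (Fin n) (Fin n) 𝕜)))))))

/-- The 6×6 block matrix `ΔT` built from the blocks of the perturbation pencil. -/
def DeltaT (m n ℓ ε η : ℕ)
    (Δ12a Δ12b : Matrix (Fin (η+1) × Fin m) (Fin ℓ) 𝕜)
    (Δ13a Δ13b : Matrix (Fin (η+1) × Fin m) (Fin η × Fin m) 𝕜)
    (Δ21a Δ21b : Matrix (Fin ℓ) (Fin (ε+1) × Fin n) 𝕜)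
    (Δ22a Δ22b : Matrix (Fin ℓ) (Fin ℓ) 𝕜)
    (Δ23a Δ23b : Matrix (Fin ℓ) (Fin η × Fin m) 𝕜)
    (Δ31a Δ31b : Matrix (Fin ε × Fin n) (Fin (ε+1) × Fin n) 𝕜)
    (Δ32a Δ32b : Matrix (Fin ε × Fin n) (Fin ℓ) 𝕜) :
    Matrix (TRow m ℓ ε η n) (TCol m ℓ ε η n) 𝕜 :=
  Matrix.fromRows
    (Matrix.fromCols
      (Matrix.fromBlocks
        (Δ13aᵀ ⊗ₖ (1 : Matrix (Fin ℓ) (Fin ℓ) 𝕜))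
        ((1 : Matrix (Fin η × Fin m) (Fin η × Fin m) 𝕜) ⊗ₖ Δ22a)
        (Δ13bᵀ ⊗ₖ (1 : Matrix (Fin ℓ) (Fin ℓ) 𝕜))
        ((1 : Matrix (Fin η × Fin m) (Fin η × Fin m) 𝕜) ⊗ₖ Δ22b))
      (Matrix.fromCols 0
        (Matrix.fromBlocks 0 ((1 : Matrix (Fin η × Fin m) (Fin η × Fin m) 𝕜) ⊗ₖ Δ21a)
          0 ((1 : Matrix (Fin η × Fin m) (Fin η × Fin m) 𝕜) ⊗ₖ Δ21b))))
    (Matrix.fromRows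
      (Matrix.fromCols 0
        (Matrix.fromCols
          (Matrix.fromBlocks
            (Δ22aᵀ ⊗ₖ (1 : Matrix (Fin ε × Fin n) (Fin ε × Fin n) 𝕜))
            ((1 : Matrix (Fin ℓ) (Fin ℓ) 𝕜) ⊗ₖ Δ31a)
            (Δ22bᵀ ⊗ₖ (1 : Matrix (Fin ε × Fin n) (Fin ε × Fin n) 𝕜))
            ((1 : Matrix (Fin ℓ) (Fin ℓ) 𝕜) ⊗ₖ Δ31b))
          (Matrix.fromBlocks
            (Δ12aᵀ ⊗ₖ (1 : Matrix (Fin ε × Fin n) (Fin ε × Fin n) 𝕜)) 0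
            (Δ12bᵀ ⊗ₖ (1 : Matrix (Fin ε × Fin n) (Fin ε × Fin n) 𝕜)) 0)))
      (Matrix.fromCols
        (Matrix.fromBlocks 0 ((1 : Matrix (Fin η × Fin m) (Fin η × Fin m) 𝕜) ⊗ₖ Δ32a)
          0 ((1 : Matrix (Fin η × Fin m) (Fin η × Fin m) 𝕜) ⊗ₖ Δ32b))
        (Matrix.fromCols
          (Matrix.fromBlocks
            (Δ23aᵀ ⊗ₖ (1 : Matrix (Fin ε × Fin n) (Fin ε × Fin n) 𝕜)) 0
            (Δ23bᵀ ⊗ₖ (1 : Matrix (Fin ε × Fin n) (Fin ε × Fin n) 𝕜)) 0)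
          (Matrix.fromBlocks
            (Δ13aᵀ ⊗ₖ (1 : Matrix (Fin ε × Fin n) (Fin ε × Fin n) 𝕜))
            ((1 : Matrix (Fin η × Fin m) (Fin η × Fin m) 𝕜) ⊗ₖ Δ31a)
            (Δ13bᵀ ⊗ₖ (1 : Matrix (Fin ε × Fin n) (Fin ε × Fin n) 𝕜))
            ((1 : Matrix (Fin η × Fin m) (Fin η × Fin m) 𝕜) ⊗ₖ Δ31b)))))

/-- `(Λ_k(x) ⊗ I_m)` where `Λ_k(x) = (x^k, …, x, 1)ᵀ`. -/
def LamI (𝕜 : Type*) [RCLike 𝕜] (k m : ℕ) (x : 𝕜) :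
    Matrix (Fin (k+1) × Fin m) (Fin m) 𝕜 :=
  Matrix.of fun i j => if i.2 = j then x ^ (k - (i.1 : ℕ)) else 0

/-- `(A, B)` is controllable if the controllability matrix `[B, AB, …, A^{ℓ-1}B]`
has full rank `ℓ`. -/
def Controllable {ℓ n : ℕ} (A : Matrix (Fin ℓ) (Fin ℓ) 𝕜)
    (B : Matrix (Fin ℓ) (Fin n) 𝕜) : Prop :=
  (Matrix.of fun (i : Fin ℓ) (p : Fin ℓ × Fin n) => (A ^ (p.1 : ℕ) * B) i p.2).rank = ℓ

/-- `(A, C)` is observable if `(Aᵀ, Cᵀ)` is controllable. -/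
def Observable {ℓ m : ℕ} (A : Matrix (Fin ℓ) (Fin ℓ) 𝕜)
    (C : Matrix (Fin m) (Fin ℓ) 𝕜) : Prop :=
  Controllable Aᵀ Cᵀ

end

/-!
Write `Δ_S(λ) = Δ_a - λ Δ_b`, `W = ‖Δ_a‖₂² + ‖Δ_b‖₂²`, and bound `‖ΔTᴴ y‖²` for every `y`. The columns of `ΔT` fall into
four families of slices; on each slice `ΔTᴴ y` is `A u + B v`, where `A, B` are corresponding
submatrices of `Δ_a, Δ_b` (up to conjugation or conjugate transposition) and `u, v` are slices
of `y`. Since a submatrix has no larger spectral norm, Cauchy–Schwarz bounds each slice by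
`W (‖u‖² + ‖v‖²)`. Every entry of `y` occurs in exactly two of these slices, so
`‖ΔTᴴ y‖² ≤ 2 W ‖y‖²`, i.e. `‖ΔT‖₂ ≤ √2 ‖Δ_S(λ)‖₂ ≤ √3 ‖Δ_S(λ)‖₂`.
-/

open scoped Matrix.Norms.L2Operator

section

variable {𝕜 : Type*} [RCLike 𝕜]

-- `ι → 𝕜` carries the sup norm, so the squared Euclidean norm is spelled out.
def vecNormSq {ι : Type*} [Fintype ι] (x : ι → 𝕜) : ℝ :=
  ∑ i, ‖x i‖ ^ 2

section vecNormSq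

variable {ι κ : Type*} [Fintype ι] [Fintype κ]

lemma vecNormSq_eq_norm_sq (x : ι → 𝕜) : vecNormSq x = ‖WithLp.toLp 2 x‖ ^ 2 :=
  (EuclideanSpace.norm_sq_eq _).symm

@[simp]
lemma vecNormSq_star (x : ι → 𝕜) : vecNormSq (star x) = vecNormSq x := by
  simp [vecNormSq]

lemma vecNormSq_sum (x : ι ⊕ κ → 𝕜) :
    vecNormSq x = vecNormSq (fun i => x (.inl i)) + vecNormSq (fun k => x (.inr k)) :=
  Fintype.sum_sum_type _

lemma vecNormSq_sum_elim (u : ι → 𝕜) (v : κ → 𝕜) :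
    vecNormSq (Sum.elim u v) = vecNormSq u + vecNormSq v :=
  vecNormSq_sum _

lemma vecNormSq_prod (x : ι × κ → 𝕜) : vecNormSq x = ∑ i, vecNormSq (fun k => x (i, k)) :=
  Fintype.sum_prod_type _

lemma vecNormSq_prod_right (x : ι × κ → 𝕜) : vecNormSq x = ∑ k, vecNormSq (fun i => x (i, k)) :=
  Fintype.sum_prod_type_right _

lemma vecNormSq_comp_le (x : ι → 𝕜) {f : κ → ι} (hf : Function.Injective f) :
    vecNormSq (x ∘ f) ≤ vecNormSq x := by
  classical
  change ∑ k, ‖x (f k)‖ ^ 2 ≤ ∑ i, ‖x i‖ ^ 2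
  rw [← Finset.sum_image (f := fun i => ‖x i‖ ^ 2) fun a _ b _ hab => hf hab]
  exact Finset.sum_le_sum_of_subset_of_nonneg (Finset.subset_univ _) fun _ _ _ => sq_nonneg _

end vecNormSq

namespace Matrix

variable {p q r s : Type*} [Fintype p] [Fintype q] [Fintype r] [Fintype s]

theorem specNorm_eq_l2_opNorm [DecidableEq p] [DecidableEq q] (M : Matrix p q 𝕜) :
    specNorm M = ‖M‖ := by
  -- `‖M‖² = ‖M Mᴴ‖` by the C⋆-identity, and unitary invariance reduces `M Mᴴ` to its eigenvalues.
  set hH := isHermitian_mul_conjTranspose_self M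
  have hD : ‖M * Mᴴ‖ = ⨆ i, hH.eigenvalues i := by
    conv_lhs => rw [hH.spectral_theorem, Unitary.conjStarAlgAut_apply,
      ← Unitary.coe_star, CStarRing.norm_mul_coe_unitary, CStarRing.norm_coe_unitary_mul,
      l2_opNorm_diagonal]
    have hnonneg := eigenvalues_self_mul_conjTranspose_nonneg M
    refine le_antisymm ((pi_norm_le_iff_of_nonneg (Real.iSup_nonneg hnonneg)).2 fun i => ?_)
      (Real.iSup_le (fun i => ?_) (norm_nonneg _))
    · simpa [abs_of_nonneg (hnonneg i)] using
        le_ciSup (Set.finite_range hH.eigenvalues).bddAbove i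
    · simpa [abs_of_nonneg (hnonneg i)] using
        norm_le_pi_norm (RCLike.ofReal (K := 𝕜) ∘ hH.eigenvalues) i
  have hM : ‖M * Mᴴ‖ = ‖M‖ ^ 2 := by
    simpa [sq, l2_opNorm_conjTranspose] using l2_opNorm_conjTranspose_mul_self Mᴴ
  rw [specNorm, ← hD, hM, Real.sqrt_sq (norm_nonneg _)]

variable [DecidableEq q]

lemma vecNormSq_mulVec_le (A : Matrix p q 𝕜) (x : q → 𝕜) :
    vecNormSq (A *ᵥ x) ≤ ‖A‖ ^ 2 * vecNormSq x := by
  rw [vecNormSq_eq_norm_sq, vecNormSq_eq_norm_sq, ← mul_pow]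
  exact pow_le_pow_left₀ (norm_nonneg _) (A.l2_opNorm_mulVec (WithLp.toLp 2 x)) 2

lemma l2_opNorm_le_sqrt_of_vecNormSq_mulVec_le {A : Matrix p q 𝕜} {c : ℝ}
    (h : ∀ x, vecNormSq (A *ᵥ x) ≤ c * vecNormSq x) : ‖A‖ ≤ √c := by
  rw [l2_opNorm_def]
  refine ContinuousLinearMap.opNorm_le_bound _ (Real.sqrt_nonneg c) fun x => ?_
  calc ‖WithLp.toLp 2 (A *ᵥ x.ofLp)‖ = √(vecNormSq (A *ᵥ x.ofLp)) := by
        rw [vecNormSq_eq_norm_sq, Real.sqrt_sq (norm_nonneg _)]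
    _ ≤ √(c * ‖x‖ ^ 2) := Real.sqrt_le_sqrt <| by simpa [vecNormSq_eq_norm_sq] using h x.ofLp
    _ = √c * ‖x‖ := by rw [Real.sqrt_mul' _ (sq_nonneg _), Real.sqrt_sq (norm_nonneg _)]

lemma l2_opNorm_submatrix_left_le (A : Matrix p q 𝕜) {f : r → p} (hf : Function.Injective f) :
    ‖A.submatrix f id‖ ≤ ‖A‖ :=
  (l2_opNorm_le_sqrt_of_vecNormSq_mulVec_le fun x =>
    (vecNormSq_comp_le (A *ᵥ x) hf).trans (vecNormSq_mulVec_le A x)).trans_eq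
      (Real.sqrt_sq (norm_nonneg _))

lemma l2_opNorm_submatrix_le [DecidableEq s] (A : Matrix p q 𝕜) {f : r → p} {g : s → q}
    (hf : Function.Injective f) (hg : Function.Injective g) : ‖A.submatrix f g‖ ≤ ‖A‖ := by
  classical
  calc ‖A.submatrix f g‖ = ‖((A.submatrix f id)ᴴ.submatrix g id)ᴴ‖ := by
        rw [conjTranspose_submatrix, conjTranspose_conjTranspose, submatrix_submatrix]; rfl
    _ = ‖(A.submatrix f id)ᴴ.submatrix g id‖ := l2_opNorm_conjTranspose _
    _ ≤ ‖(A.submatrix f id)ᴴ‖ := l2_opNorm_submatrix_left_le _ hg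
    _ = ‖A.submatrix f id‖ := l2_opNorm_conjTranspose _
    _ ≤ ‖A‖ := l2_opNorm_submatrix_left_le _ hf

lemma vecNormSq_mulVec_add_mulVec_le (A B : Matrix p q 𝕜) (u v : q → 𝕜) {a b : ℝ}
    (hA : ‖A‖ ≤ a) (hB : ‖B‖ ≤ b) :
    vecNormSq (A *ᵥ u + B *ᵥ v) ≤ (a ^ 2 + b ^ 2) * (vecNormSq u + vecNormSq v) := by
  simp only [vecNormSq_eq_norm_sq, WithLp.toLp_add]
  set x := ‖WithLp.toLp 2 u‖
  set z := ‖WithLp.toLp 2 v‖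
  have hAu : ‖WithLp.toLp 2 (A *ᵥ u)‖ ≤ a * x :=
    (A.l2_opNorm_mulVec _).trans (mul_le_mul_of_nonneg_right hA (norm_nonneg _))
  have hBv : ‖WithLp.toLp 2 (B *ᵥ v)‖ ≤ b * z :=
    (B.l2_opNorm_mulVec _).trans (mul_le_mul_of_nonneg_right hB (norm_nonneg _))
  calc _ ≤ (a * x + b * z) ^ 2 :=
        pow_le_pow_left₀ (norm_nonneg _) ((norm_add_le _ _).trans (add_le_add hAu hBv)) 2
    _ ≤ (a ^ 2 + b ^ 2) * (x ^ 2 + z ^ 2) := by nlinarith [sq_nonneg (a * z - b * x)]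

end Matrix

section blocks3

variable {R₁ R₂ R₃ C₁ C₂ C₃ : Type*} [Fintype R₁] [Fintype R₂] [Fintype R₃]
  [Fintype C₁] [Fintype C₂] [Fintype C₃] [DecidableEq C₁] [DecidableEq C₂] [DecidableEq C₃]
  (M₁₁ : Matrix R₁ C₁ 𝕜) (M₁₂ : Matrix R₁ C₂ 𝕜) (M₁₃ : Matrix R₁ C₃ 𝕜)
  (M₂₁ : Matrix R₂ C₁ 𝕜) (M₂₂ : Matrix R₂ C₂ 𝕜) (M₂₃ : Matrix R₂ C₃ 𝕜)
  (M₃₁ : Matrix R₃ C₁ 𝕜) (M₃₂ : Matrix R₃ C₂ 𝕜) (M₃₃ : Matrix R₃ C₃ 𝕜)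

local notation "M" => blocks3 M₁₁ M₁₂ M₁₃ M₂₁ M₂₂ M₂₃ M₃₁ M₃₂ M₃₃

lemma l2_opNorm_le_blocks3₁₃ : ‖M₁₃‖ ≤ ‖M‖ :=
  calc ‖M₁₃‖ = ‖(M).submatrix Sum.inl (Sum.inr ∘ Sum.inr)‖ := rfl
    _ ≤ ‖M‖ := l2_opNorm_submatrix_le _ Sum.inl_injective
      (Sum.inr_injective.comp Sum.inr_injective)

lemma l2_opNorm_le_blocks3₃₁ : ‖M₃₁‖ ≤ ‖M‖ :=
  calc ‖M₃₁‖ = ‖(M).submatrix (Sum.inr ∘ Sum.inr) Sum.inl‖ := rfl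
    _ ≤ ‖M‖ := l2_opNorm_submatrix_le _ (Sum.inr_injective.comp Sum.inr_injective)
      Sum.inl_injective

lemma l2_opNorm_fromBlocks_le_blocks3₁₂ : ‖fromBlocks M₁₂ M₁₃ M₂₂ M₂₃‖ ≤ ‖M‖ :=
  calc ‖fromBlocks M₁₂ M₁₃ M₂₂ M₂₃‖ = ‖(M).submatrix (Sum.map id Sum.inl) Sum.inr‖ := by
        congr 1; ext (_ | _) (_ | _) <;> rfl
    _ ≤ ‖M‖ := l2_opNorm_submatrix_le _ (Function.injective_id.sumMap Sum.inl_injective)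
      Sum.inr_injective

lemma l2_opNorm_fromBlocks_le_blocks3₂₁ : ‖fromBlocks M₂₁ M₂₂ M₃₁ M₃₂‖ ≤ ‖M‖ :=
  calc ‖fromBlocks M₂₁ M₂₂ M₃₁ M₃₂‖ = ‖(M).submatrix Sum.inr (Sum.map id Sum.inl)‖ := by
        congr 1; ext (_ | _) (_ | _) <;> rfl
    _ ≤ ‖M‖ := l2_opNorm_submatrix_le _ Sum.inr_injective
      (Function.injective_id.sumMap Sum.inl_injective)

end blocks3

namespace DeltaT

variable {m n ℓ ε η : ℕ}
  (Δ12a Δ12b : Matrix (Fin (η+1) × Fin m) (Fin ℓ) 𝕜)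
  (Δ13a Δ13b : Matrix (Fin (η+1) × Fin m) (Fin η × Fin m) 𝕜)
  (Δ21a Δ21b : Matrix (Fin ℓ) (Fin (ε+1) × Fin n) 𝕜)
  (Δ22a Δ22b : Matrix (Fin ℓ) (Fin ℓ) 𝕜)
  (Δ23a Δ23b : Matrix (Fin ℓ) (Fin η × Fin m) 𝕜)
  (Δ31a Δ31b : Matrix (Fin ε × Fin n) (Fin (ε+1) × Fin n) 𝕜)
  (Δ32a Δ32b : Matrix (Fin ε × Fin n) (Fin ℓ) 𝕜)
  (y : TRow m ℓ ε η n → 𝕜)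
  (Δ11a Δ11b : Matrix (Fin (η+1) × Fin m) (Fin (ε+1) × Fin n) 𝕜)
  (Δ33a Δ33b : Matrix (Fin ε × Fin n) (Fin η × Fin m) 𝕜)

local notation "ΔT" => DeltaT m n ℓ ε η Δ12a Δ12b Δ13a Δ13b Δ21a Δ21b Δ22a Δ22b Δ23a Δ23b
  Δ31a Δ31b Δ32a Δ32b

local notation "Δ_a" => blocks3 Δ11a Δ12a Δ13a Δ21a Δ22a Δ23a Δ31a Δ32a Δ33a

local notation "Δ_b" => blocks3 Δ11b Δ12b Δ13b Δ21b Δ22b Δ23b Δ31b Δ32b Δ33b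

-- `colₖ` is the `k`-th block column of `ΔT` as displayed in the paper; in `TCol` these are
-- `.inl (.inl _)`, `.inl (.inr _)`, `.inr (.inl (.inl _))`, `.inr (.inl (.inr _))`,
-- `.inr (.inr (.inl _))`, `.inr (.inr (.inr _))`, and similarly for the block rows in `TRow`.

lemma conjTranspose_mulVec_col₁ (c : Fin ℓ) :
    (fun j => (ΔTᴴ *ᵥ y) (.inl (.inl (j, c)))) =
      star (Δ13a *ᵥ star (fun r => y (.inl (.inl (r, c))))
        + Δ13b *ᵥ star (fun r => y (.inl (.inr (r, c))))) := by
  funext j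
  simp [DeltaT, mulVec, dotProduct, Fintype.sum_sum_type, Fintype.sum_prod_type, one_apply,
    apply_ite (starRingEnd 𝕜), ite_mul]

lemma conjTranspose_mulVec_col₅_col₃ (e : Fin ε × Fin n) :
    Sum.elim (fun j => (ΔTᴴ *ᵥ y) (.inr (.inr (.inl (j, e)))))
        (fun c => (ΔTᴴ *ᵥ y) (.inr (.inl (.inl (c, e))))) =
      star (fromBlocks Δ12a Δ13a Δ22a Δ23a *ᵥ
          star (Sum.elim (fun c => y (.inr (.inl (.inl (c, e)))))
            (fun r => y (.inr (.inr (.inl (r, e))))))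
        + fromBlocks Δ12b Δ13b Δ22b Δ23b *ᵥ
          star (Sum.elim (fun c => y (.inr (.inl (.inr (c, e)))))
            (fun r => y (.inr (.inr (.inr (r, e))))))) := by
  ext (j | c) <;>
  simp only [mulVec, dotProduct, DeltaT, fromRows_fromCols_eq_fromBlocks, conjTranspose_apply,
    RCLike.star_def, Fintype.sum_sum_type, fromRows_apply_inl, fromCols_apply_inr,
    fromBlocks_apply₁₁, Matrix.zero_apply, map_zero, zero_mul, Finset.sum_const_zero,
    fromBlocks_apply₂₁, add_zero, fromRows_apply_inr, fromBlocks_apply₁₂, kroneckerMap_apply,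
    transpose_apply, one_apply, mul_ite, mul_one, mul_zero, apply_ite (starRingEnd 𝕜), ite_mul,
    Fintype.sum_prod_type, Finset.sum_ite_eq', Finset.mem_univ, ↓reduceIte, fromBlocks_apply₂₂,
    zero_add, fromCols_apply_inl, Sum.elim_inl, Pi.star_apply, Pi.add_apply, Sum.elim_inr,
    star_add, star_sum, star_mul', RingHomCompTriple.comp_apply, RingHom.id_apply] <;>
  exact add_add_add_comm ..

lemma conjTranspose_mulVec_col₄ (c : Fin ℓ) :
    (fun j => (ΔTᴴ *ᵥ y) (.inr (.inl (.inr (c, j))))) =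
      Δ31aᴴ *ᵥ (fun e => y (.inr (.inl (.inl (c, e)))))
        + Δ31bᴴ *ᵥ (fun e => y (.inr (.inl (.inr (c, e))))) := by
  funext j
  simp [DeltaT, mulVec, dotProduct, Fintype.sum_sum_type, Fintype.sum_prod_type, one_apply,
    apply_ite (starRingEnd 𝕜), ite_mul]

lemma conjTranspose_mulVec_col₆_col₂ (r : Fin η × Fin m) :
    Sum.elim (fun j => (ΔTᴴ *ᵥ y) (.inr (.inr (.inr (r, j)))))
        (fun c => (ΔTᴴ *ᵥ y) (.inl (.inr (r, c)))) =
      (fromBlocks Δ21a Δ22a Δ31a Δ32a)ᴴ *ᵥ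
          Sum.elim (fun c => y (.inl (.inl (r, c)))) (fun e => y (.inr (.inr (.inl (r, e)))))
        + (fromBlocks Δ21b Δ22b Δ31b Δ32b)ᴴ *ᵥ
          Sum.elim (fun c => y (.inl (.inr (r, c)))) (fun e => y (.inr (.inr (.inr (r, e))))) := by
  ext (j | c) <;>
  simp only [mulVec, dotProduct, DeltaT, fromRows_fromCols_eq_fromBlocks, conjTranspose_apply,
    RCLike.star_def, Fintype.sum_sum_type, fromRows_apply_inl, fromCols_apply_inr,
    fromBlocks_apply₁₂, kroneckerMap_apply, one_apply, ite_mul, one_mul, zero_mul,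
    apply_ite (starRingEnd 𝕜), map_zero, Fintype.sum_prod_type, Finset.sum_ite_irrel,
    Finset.sum_const_zero, Finset.sum_ite_eq', Finset.mem_univ, ↓reduceIte, fromBlocks_apply₂₂,
    fromRows_apply_inr, Matrix.zero_apply, add_zero, zero_add, fromCols_apply_inl,
    fromBlocks_apply₁₁, fromBlocks_apply₂₁, Sum.elim_inl, Pi.add_apply, Sum.elim_inr] <;>
  exact add_add_add_comm ..

variable {a b : ℝ}

lemma vecNormSq_col₁_le (ha : ‖Δ13a‖ ≤ a) (hb : ‖Δ13b‖ ≤ b) :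
    vecNormSq (fun i => (ΔTᴴ *ᵥ y) (.inl (.inl i))) ≤
      (a ^ 2 + b ^ 2) * (vecNormSq (fun i => y (.inl (.inl i)))
        + vecNormSq (fun i => y (.inl (.inr i)))) := by
  simp only [vecNormSq_prod_right (κ := Fin ℓ), Finset.mul_sum, ← Finset.sum_add_distrib]
  refine Finset.sum_le_sum fun c _ => ?_
  rw [conjTranspose_mulVec_col₁, vecNormSq_star]
  refine (vecNormSq_mulVec_add_mulVec_le _ _ _ _ ha hb).trans_eq ?_
  simp only [vecNormSq_star]

lemma vecNormSq_col₅_add_col₃_le (ha : ‖fromBlocks Δ12a Δ13a Δ22a Δ23a‖ ≤ a)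
    (hb : ‖fromBlocks Δ12b Δ13b Δ22b Δ23b‖ ≤ b) :
    vecNormSq (fun i => (ΔTᴴ *ᵥ y) (.inr (.inr (.inl i))))
        + vecNormSq (fun i => (ΔTᴴ *ᵥ y) (.inr (.inl (.inl i)))) ≤
      (a ^ 2 + b ^ 2) * ((vecNormSq (fun i => y (.inr (.inl (.inl i))))
          + vecNormSq (fun i => y (.inr (.inr (.inl i)))))
        + (vecNormSq (fun i => y (.inr (.inl (.inr i))))
          + vecNormSq (fun i => y (.inr (.inr (.inr i)))))) := by
  simp only [vecNormSq_prod_right (κ := Fin ε × Fin n), Finset.mul_sum,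
    ← Finset.sum_add_distrib]
  refine Finset.sum_le_sum fun e _ => ?_
  rw [← vecNormSq_sum_elim, conjTranspose_mulVec_col₅_col₃, vecNormSq_star]
  refine (vecNormSq_mulVec_add_mulVec_le _ _ _ _ ha hb).trans_eq ?_
  simp only [vecNormSq_star, vecNormSq_sum_elim]

lemma vecNormSq_col₄_le (ha : ‖Δ31a‖ ≤ a) (hb : ‖Δ31b‖ ≤ b) :
    vecNormSq (fun i => (ΔTᴴ *ᵥ y) (.inr (.inl (.inr i)))) ≤
      (a ^ 2 + b ^ 2) * (vecNormSq (fun i => y (.inr (.inl (.inl i))))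
        + vecNormSq (fun i => y (.inr (.inl (.inr i))))) := by
  simp only [vecNormSq_prod (ι := Fin ℓ), Finset.mul_sum, ← Finset.sum_add_distrib]
  refine Finset.sum_le_sum fun c _ => ?_
  rw [conjTranspose_mulVec_col₄]
  exact vecNormSq_mulVec_add_mulVec_le _ _ _ _ (by rwa [l2_opNorm_conjTranspose])
    (by rwa [l2_opNorm_conjTranspose])

lemma vecNormSq_col₆_add_col₂_le (ha : ‖fromBlocks Δ21a Δ22a Δ31a Δ32a‖ ≤ a)
    (hb : ‖fromBlocks Δ21b Δ22b Δ31b Δ32b‖ ≤ b) :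
    vecNormSq (fun i => (ΔTᴴ *ᵥ y) (.inr (.inr (.inr i))))
        + vecNormSq (fun i => (ΔTᴴ *ᵥ y) (.inl (.inr i))) ≤
      (a ^ 2 + b ^ 2) * ((vecNormSq (fun i => y (.inl (.inl i)))
          + vecNormSq (fun i => y (.inr (.inr (.inl i)))))
        + (vecNormSq (fun i => y (.inl (.inr i)))
          + vecNormSq (fun i => y (.inr (.inr (.inr i)))))) := by
  simp only [vecNormSq_prod (ι := Fin η × Fin m), Finset.mul_sum, ← Finset.sum_add_distrib]
  refine Finset.sum_le_sum fun r _ => ?_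
  rw [← vecNormSq_sum_elim, conjTranspose_mulVec_col₆_col₂, ← vecNormSq_sum_elim,
    ← vecNormSq_sum_elim]
  exact vecNormSq_mulVec_add_mulVec_le _ _ _ _ (by rwa [l2_opNorm_conjTranspose])
    (by rwa [l2_opNorm_conjTranspose])

theorem vecNormSq_conjTranspose_mulVec_le :
    vecNormSq (ΔTᴴ *ᵥ y) ≤ 2 * (‖Δ_a‖ ^ 2 + ‖Δ_b‖ ^ 2) * vecNormSq y := by
  have h₁ := vecNormSq_col₁_le Δ12a Δ12b Δ13a Δ13b Δ21a Δ21b Δ22a Δ22b Δ23a Δ23b Δ31a Δ31b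
    Δ32a Δ32b y (l2_opNorm_le_blocks3₁₃ .. : _ ≤ ‖Δ_a‖) (l2_opNorm_le_blocks3₁₃ .. : _ ≤ ‖Δ_b‖)
  have h₂ := vecNormSq_col₅_add_col₃_le Δ12a Δ12b Δ13a Δ13b Δ21a Δ21b Δ22a Δ22b Δ23a Δ23b
    Δ31a Δ31b Δ32a Δ32b y (l2_opNorm_fromBlocks_le_blocks3₁₂ .. : _ ≤ ‖Δ_a‖)
    (l2_opNorm_fromBlocks_le_blocks3₁₂ .. : _ ≤ ‖Δ_b‖)
  have h₃ := vecNormSq_col₄_le Δ12a Δ12b Δ13a Δ13b Δ21a Δ21b Δ22a Δ22b Δ23a Δ23b Δ31a Δ31b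
    Δ32a Δ32b y (l2_opNorm_le_blocks3₃₁ .. : _ ≤ ‖Δ_a‖) (l2_opNorm_le_blocks3₃₁ .. : _ ≤ ‖Δ_b‖)
  have h₄ := vecNormSq_col₆_add_col₂_le Δ12a Δ12b Δ13a Δ13b Δ21a Δ21b Δ22a Δ22b Δ23a Δ23b
    Δ31a Δ31b Δ32a Δ32b y (l2_opNorm_fromBlocks_le_blocks3₂₁ .. : _ ≤ ‖Δ_a‖)
    (l2_opNorm_fromBlocks_le_blocks3₂₁ .. : _ ≤ ‖Δ_b‖)
  -- every block row of `y` occurs in exactly two of `h₁`, …, `h₄`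
  simp only [vecNormSq_sum]
  linarith

end DeltaT

end

theorem statement6 {𝕜 : Type*} [RCLike 𝕜] (m n ℓ ε η : ℕ)
    (Δ11a Δ11b : Matrix (Fin (η+1) × Fin m) (Fin (ε+1) × Fin n) 𝕜)
    (Δ12a Δ12b : Matrix (Fin (η+1) × Fin m) (Fin ℓ) 𝕜)
    (Δ13a Δ13b : Matrix (Fin (η+1) × Fin m) (Fin η × Fin m) 𝕜)
    (Δ21a Δ21b : Matrix (Fin ℓ) (Fin (ε+1) × Fin n) 𝕜)
    (Δ22a Δ22b : Matrix (Fin ℓ) (Fin ℓ) 𝕜)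
    (Δ23a Δ23b : Matrix (Fin ℓ) (Fin η × Fin m) 𝕜)
    (Δ31a Δ31b : Matrix (Fin ε × Fin n) (Fin (ε+1) × Fin n) 𝕜)
    (Δ32a Δ32b : Matrix (Fin ε × Fin n) (Fin ℓ) 𝕜)
    (Δ33a Δ33b : Matrix (Fin ε × Fin n) (Fin η × Fin m) 𝕜) :
    specNorm (DeltaT m n ℓ ε η Δ12a Δ12b Δ13a Δ13b Δ21a Δ21b Δ22a Δ22b Δ23a Δ23b
        Δ31a Δ31b Δ32a Δ32b) ≤
      Real.sqrt 3 * pSpec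
        (blocks3 Δ11a Δ12a Δ13a Δ21a Δ22a Δ23a Δ31a Δ32a Δ33a,
         blocks3 Δ11b Δ12b Δ13b Δ21b Δ22b Δ23b Δ31b Δ32b Δ33b) := by
  have hΔT := fun y => DeltaT.vecNormSq_conjTranspose_mulVec_le Δ12a Δ12b Δ13a Δ13b Δ21a Δ21b
    Δ22a Δ22b Δ23a Δ23b Δ31a Δ31b Δ32a Δ32b y Δ11a Δ11b Δ33a Δ33b
  rw [specNorm_eq_l2_opNorm, ← l2_opNorm_conjTranspose, pSpec, specNorm_eq_l2_opNorm,
    specNorm_eq_l2_opNorm, ← Real.sqrt_mul (by norm_num)]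
  refine (l2_opNorm_le_sqrt_of_vecNormSq_mulVec_le hΔT).trans (Real.sqrt_le_sqrt ?_)
  gcongr
  norm_num
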